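/- arXiv:2010.14424 — 2 statements merged into one kernel-verified Lean document; each statement's English description precedes it below -/
import Mathlib

section
/- Let L > 0, ε > 0, α, β ∈ (0,1), let k : [0,L] → ℝ be continuously differentiable with k(x) > 0 and k'(x) < 0 for all x ∈ [0,L], and let (ρ, J) be a classical solution of the area-averaged pedestrian boundary value problem such that ρ is twice continuously differentiable and 0 < ρ(x) < 1 for all x. Then ρ has no local minimum on the open interval (0,L), and ρ(x) ≥ min(α, 1−β) for every x ∈ [0,L]. Symmetrically, if instead k'(x) > 0 for all x, then ρ has no local maximum on (0,L) and ρ(x) ≤ max(α, 1−β) for every x ∈ [0,L]. -/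
/-!
Differentiating the constant flux `k (-ε ρ' + ρ (1 - ρ)) = J` at an interior critical point
of `ρ` gives `ε k ρ'' = k' ρ (1 - ρ)`. For a closing corridor (`k' < 0`) and `0 < ρ < 1` this
forces `ρ'' < 0`, so no interior critical point is a local minimum, and the minimum of `ρ` over
`[0, L]` is attained at an endpoint. There the sign of `ρ'` turns the boundary conditions into
`α ≤ ρ 0`, resp. `1 - β ≤ ρ L`. An opening corridor (`k' > 0`) is symmetric.
-/

open Set

/-- A classical solution `(ρ, J)` (with derivative `ρ'`) of the area-averaged pedestrian
boundary value problem on `[0, L]` with diffusion `ε`, inflow rate `α`, outflow rate `β`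
and width function `k`. -/
def IsClassicalSolution (L ε α β : ℝ) (k ρ ρ' : ℝ → ℝ) (J : ℝ) : Prop :=
  (∀ x ∈ Icc (0:ℝ) L, HasDerivWithinAt ρ (ρ' x) (Icc 0 L) x) ∧
  ContinuousOn ρ' (Icc 0 L) ∧
  (∀ x ∈ Icc (0:ℝ) L, k x * (-ε * ρ' x + ρ x * (1 - ρ x)) = J) ∧
  -ε * ρ' 0 + ρ 0 * (1 - ρ 0) = α * (1 - ρ 0) ∧
  -ε * ρ' L + ρ L * (1 - ρ L) = β * ρ L

open Filter Topology

section SecondDerivative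

variable {f f' : ℝ → ℝ} {a f'' : ℝ}

theorem IsLocalMin.second_deriv_nonneg (h : IsLocalMin f a)
    (hf : ∀ᶠ x in 𝓝 a, HasDerivAt f (f' x) x) (hf' : HasDerivAt f' f'' a) : 0 ≤ f'' := by
  by_contra! hneg
  have hcrit : f' a = 0 := h.hasDerivAt_eq_zero hf.self_of_nhds
  have hderiv : deriv f =ᶠ[𝓝 a] f' := hf.mono fun x hx => hx.deriv
  -- `f'' < 0` makes `a` a local maximum as well, so `f` is locally constant and `f'' = 0`.
  have hmax : IsLocalMax f a := isLocalMax_of_deriv_deriv_neg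
    (by rwa [hderiv.deriv_eq, hf'.deriv]) (by rw [hderiv.self_of_nhds, hcrit])
    hf.self_of_nhds.continuousAt
  have hconst : f =ᶠ[𝓝 a] fun _ => f a := (h.and hmax).mono fun x hx => le_antisymm hx.2 hx.1
  have hflat : f' =ᶠ[𝓝 a] fun _ => 0 :=
    (hf.and hconst.eventuallyEq_nhds).mono fun x hx =>
      hx.1.unique ((hasDerivAt_const x (f a)).congr_of_eventuallyEq hx.2)
  exact hneg.ne ((hasDerivAt_const a (0 : ℝ)).congr_of_eventuallyEq hflat |>.unique hf').symm

theorem IsLocalMax.second_deriv_nonpos (h : IsLocalMax f a)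
    (hf : ∀ᶠ x in 𝓝 a, HasDerivAt f (f' x) x) (hf' : HasDerivAt f' f'' a) : f'' ≤ 0 := by
  simpa using h.neg.second_deriv_nonneg (hf.mono fun x hx => hx.neg) hf'.neg

end SecondDerivative

section Endpoint

variable {f : ℝ → ℝ} {s : Set ℝ} {a c d : ℝ}

theorem IsLocalMinOn.sub_mul_hasDerivWithinAt_nonneg (h : IsLocalMinOn f s a)
    (hd : HasDerivWithinAt f d s a) (hs : segment ℝ a c ⊆ s) : 0 ≤ (c - a) * d := by
  simpa [mul_comm] using
    h.hasFDerivWithinAt_nonneg hd.hasFDerivWithinAt (sub_mem_posTangentConeAt_of_segment_subset hs)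

theorem IsLocalMaxOn.sub_mul_hasDerivWithinAt_nonpos (h : IsLocalMaxOn f s a)
    (hd : HasDerivWithinAt f d s a) (hs : segment ℝ a c ⊆ s) : (c - a) * d ≤ 0 := by
  simpa [mul_comm] using
    h.hasFDerivWithinAt_nonpos hd.hasFDerivWithinAt (sub_mem_posTangentConeAt_of_segment_subset hs)

end Endpoint

section Extremum

variable {f : ℝ → ℝ} {a b : ℝ}

theorem isMinOn_left_or_right_of_forall_not_isLocalMin (hab : a ≤ b)
    (hf : ContinuousOn f (Icc a b)) (h : ∀ x ∈ Ioo a b, ¬IsLocalMin f x) :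
    IsMinOn f (Icc a b) a ∨ IsMinOn f (Icc a b) b := by
  obtain ⟨x, ⟨hax, hxb⟩, hmin⟩ := isCompact_Icc.exists_isMinOn (nonempty_Icc.2 hab) hf
  rcases hax.eq_or_lt with rfl | hax
  · exact .inl hmin
  rcases hxb.eq_or_lt with rfl | hxb
  · exact .inr hmin
  exact absurd (hmin.isLocalMin (Icc_mem_nhds hax hxb)) (h x ⟨hax, hxb⟩)

theorem isMaxOn_left_or_right_of_forall_not_isLocalMax (hab : a ≤ b)
    (hf : ContinuousOn f (Icc a b)) (h : ∀ x ∈ Ioo a b, ¬IsLocalMax f x) :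
    IsMaxOn f (Icc a b) a ∨ IsMaxOn f (Icc a b) b := by
  have := isMinOn_left_or_right_of_forall_not_isLocalMin hab hf.neg
    fun x hx hmin => h x hx (by simpa using hmin.neg)
  simpa using this.imp IsMinOn.neg IsMinOn.neg

end Extremum

namespace IsClassicalSolution

variable {L ε α β J : ℝ} {k ρ ρ' : ℝ → ℝ}

theorem continuousOn (hsol : IsClassicalSolution L ε α β k ρ ρ' J) :
    ContinuousOn ρ (Icc 0 L) :=
  fun x hx => (hsol.1 x hx).continuousWithinAt

theorem hasDerivAt (hsol : IsClassicalSolution L ε α β k ρ ρ' J) {x : ℝ}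
    (hx : x ∈ Ioo 0 L) : HasDerivAt ρ (ρ' x) x :=
  (hsol.1 x (Ioo_subset_Icc_self hx)).hasDerivAt (Icc_mem_nhds hx.1 hx.2)

theorem eventually_hasDerivAt (hsol : IsClassicalSolution L ε α β k ρ ρ' J) {x : ℝ}
    (hx : x ∈ Ioo 0 L) : ∀ᶠ y in 𝓝 x, HasDerivAt ρ (ρ' y) y :=
  eventually_of_mem (Ioo_mem_nhds hx.1 hx.2) fun _ hy => hsol.hasDerivAt hy

theorem eps_mul_mul_eq_of_deriv_eq_zero (hsol : IsClassicalSolution L ε α β k ρ ρ' J)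
    {x k'x ρ''x : ℝ} (hx : x ∈ Ioo 0 L) (hk : HasDerivAt k k'x x)
    (hρ' : HasDerivAt ρ' ρ''x x) (hcrit : ρ' x = 0) :
    ε * k x * ρ''x = k'x * (ρ x * (1 - ρ x)) := by
  have hρ := hsol.hasDerivAt hx
  have hflux := hk.mul ((hρ'.const_mul (-ε)).add (hρ.mul ((hasDerivAt_const x 1).sub hρ)))
  have hconst : HasDerivAt (fun y => k y * (-ε * ρ' y + ρ y * (1 - ρ y))) 0 x :=
    (hasDerivAt_const x J).congr_of_eventuallyEq <|
      eventually_of_mem (Icc_mem_nhds hx.1 hx.2) hsol.2.2.1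
  have := hflux.unique hconst
  simp only [Pi.add_apply, Pi.mul_apply, Pi.sub_apply, hcrit] at this
  linear_combination -this

theorem not_isLocalMin_of_hasDerivAt_neg (hsol : IsClassicalSolution L ε α β k ρ ρ' J)
    (hε : 0 < ε) {x k'x ρ''x : ℝ} (hx : x ∈ Ioo 0 L) (hk : HasDerivAt k k'x x)
    (hk' : k'x < 0) (hkpos : 0 < k x) (hρ' : HasDerivAt ρ' ρ''x x)
    (hρ : 0 < ρ x ∧ ρ x < 1) :
    ¬IsLocalMin ρ x := by
  intro hmin
  have hρ'' : 0 ≤ ρ''x := hmin.second_deriv_nonneg (hsol.eventually_hasDerivAt hx) hρ'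
  have key := hsol.eps_mul_mul_eq_of_deriv_eq_zero hx hk hρ'
    (hmin.hasDerivAt_eq_zero (hsol.hasDerivAt hx))
  have : k'x * (ρ x * (1 - ρ x)) < 0 := mul_neg_of_neg_of_pos hk' (mul_pos hρ.1 (by linarith))
  have : 0 ≤ ε * k x * ρ''x := by positivity
  linarith

theorem not_isLocalMax_of_hasDerivAt_pos (hsol : IsClassicalSolution L ε α β k ρ ρ' J)
    (hε : 0 < ε) {x k'x ρ''x : ℝ} (hx : x ∈ Ioo 0 L) (hk : HasDerivAt k k'x x)
    (hk' : 0 < k'x) (hkpos : 0 < k x) (hρ' : HasDerivAt ρ' ρ''x x)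
    (hρ : 0 < ρ x ∧ ρ x < 1) :
    ¬IsLocalMax ρ x := by
  intro hmax
  have hρ'' : ρ''x ≤ 0 := hmax.second_deriv_nonpos (hsol.eventually_hasDerivAt hx) hρ'
  have key := hsol.eps_mul_mul_eq_of_deriv_eq_zero hx hk hρ'
    (hmax.hasDerivAt_eq_zero (hsol.hasDerivAt hx))
  have : 0 < k'x * (ρ x * (1 - ρ x)) := mul_pos hk' (mul_pos hρ.1 (by linarith))
  have : ε * k x * ρ''x ≤ 0 := mul_nonpos_of_nonneg_of_nonpos (by positivity) hρ''
  linarith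

theorem alpha_le_of_isMinOn (hsol : IsClassicalSolution L ε α β k ρ ρ' J) (hL : 0 < L)
    (hε : 0 < ε) (hρ : ρ 0 < 1) (hmin : IsMinOn ρ (Icc 0 L) 0) : α ≤ ρ 0 := by
  have hd := hmin.localize.sub_mul_hasDerivWithinAt_nonneg (hsol.1 0 (left_mem_Icc.2 hL.le))
    (segment_eq_Icc hL.le).subset
  have hd : 0 ≤ ρ' 0 := nonneg_of_mul_nonneg_right (by simpa [mul_comm] using hd) (by simpa)
  nlinarith [hsol.2.2.2.1]

theorem le_alpha_of_isMaxOn (hsol : IsClassicalSolution L ε α β k ρ ρ' J) (hL : 0 < L)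
    (hε : 0 < ε) (hρ : ρ 0 < 1) (hmax : IsMaxOn ρ (Icc 0 L) 0) : ρ 0 ≤ α := by
  have hd := hmax.localize.sub_mul_hasDerivWithinAt_nonpos (hsol.1 0 (left_mem_Icc.2 hL.le))
    (segment_eq_Icc hL.le).subset
  have hd : ρ' 0 ≤ 0 := nonpos_of_mul_nonpos_right (by simpa [mul_comm] using hd) (by simpa)
  nlinarith [hsol.2.2.2.1]

theorem one_sub_beta_le_of_isMinOn (hsol : IsClassicalSolution L ε α β k ρ ρ' J) (hL : 0 < L)
    (hε : 0 < ε) (hρ : 0 < ρ L) (hmin : IsMinOn ρ (Icc 0 L) L) : 1 - β ≤ ρ L := by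
  have hd := hmin.localize.sub_mul_hasDerivWithinAt_nonneg (hsol.1 L (right_mem_Icc.2 hL.le))
    (by rw [segment_symm, segment_eq_Icc hL.le])
  have hd : ρ' L ≤ 0 := by nlinarith
  nlinarith [hsol.2.2.2.2]

theorem le_one_sub_beta_of_isMaxOn (hsol : IsClassicalSolution L ε α β k ρ ρ' J) (hL : 0 < L)
    (hε : 0 < ε) (hρ : 0 < ρ L) (hmax : IsMaxOn ρ (Icc 0 L) L) : ρ L ≤ 1 - β := by
  have hd := hmax.localize.sub_mul_hasDerivWithinAt_nonpos (hsol.1 L (right_mem_Icc.2 hL.le))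
    (by rw [segment_symm, segment_eq_Icc hL.le])
  have hd : 0 ≤ ρ' L := by nlinarith
  nlinarith [hsol.2.2.2.2]

end IsClassicalSolution

theorem no_interior_extrema_monotone_width_general
    (L ε α β J : ℝ) (k k' ρ ρ' ρ'' : ℝ → ℝ)
    (hL : 0 < L) (hε : 0 < ε)
    (hk : ∀ x ∈ Icc (0:ℝ) L, HasDerivWithinAt k (k' x) (Icc 0 L) x)
    (hkpos : ∀ x ∈ Icc (0:ℝ) L, 0 < k x)
    (hsol : IsClassicalSolution L ε α β k ρ ρ' J)
    (hρ'' : ∀ x ∈ Icc (0:ℝ) L, HasDerivWithinAt ρ' (ρ'' x) (Icc 0 L) x)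
    (hbound : ∀ x ∈ Icc (0:ℝ) L, 0 < ρ x ∧ ρ x < 1) :
    ((∀ x ∈ Icc (0:ℝ) L, k' x < 0) →
      (∀ x ∈ Ioo (0:ℝ) L, ¬ IsLocalMin ρ x) ∧
      (∀ x ∈ Icc (0:ℝ) L, min α (1 - β) ≤ ρ x)) ∧
    ((∀ x ∈ Icc (0:ℝ) L, 0 < k' x) →
      (∀ x ∈ Ioo (0:ℝ) L, ¬ IsLocalMax ρ x) ∧
      (∀ x ∈ Icc (0:ℝ) L, ρ x ≤ max α (1 - β))) := by
  have hderiv {f f' : ℝ → ℝ}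
      (hf : ∀ x ∈ Icc (0:ℝ) L, HasDerivWithinAt f (f' x) (Icc 0 L) x) {x : ℝ}
      (hx : x ∈ Ioo 0 L) : HasDerivAt f (f' x) x :=
    (hf x (Ioo_subset_Icc_self hx)).hasDerivAt (Icc_mem_nhds hx.1 hx.2)
  have hρ0 := hbound 0 (left_mem_Icc.2 hL.le)
  have hρL := hbound L (right_mem_Icc.2 hL.le)
  refine ⟨fun hk' => ?_, fun hk' => ?_⟩
  · have hno (x) (hx : x ∈ Ioo 0 L) : ¬IsLocalMin ρ x :=
      have hx' := Ioo_subset_Icc_self hx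
      hsol.not_isLocalMin_of_hasDerivAt_neg hε hx (hderiv hk hx) (hk' x hx') (hkpos x hx')
        (hderiv hρ'' hx) (hbound x hx')
    refine ⟨hno, fun x hx => ?_⟩
    rcases isMinOn_left_or_right_of_forall_not_isLocalMin hL.le hsol.continuousOn hno with
      hmin | hmin
    · exact (min_le_left _ _).trans ((hsol.alpha_le_of_isMinOn hL hε hρ0.2 hmin).trans (hmin hx))
    · exact (min_le_right _ _).trans
        ((hsol.one_sub_beta_le_of_isMinOn hL hε hρL.1 hmin).trans (hmin hx))
  · have hno (x) (hx : x ∈ Ioo 0 L) : ¬IsLocalMax ρ x :=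
      have hx' := Ioo_subset_Icc_self hx
      hsol.not_isLocalMax_of_hasDerivAt_pos hε hx (hderiv hk hx) (hk' x hx') (hkpos x hx')
        (hderiv hρ'' hx) (hbound x hx')
    refine ⟨hno, fun x hx => ?_⟩
    rcases isMaxOn_left_or_right_of_forall_not_isLocalMax hL.le hsol.continuousOn hno with
      hmax | hmax
    · exact (hmax hx).trans ((hsol.le_alpha_of_isMaxOn hL hε hρ0.2 hmax).trans (le_max_left _ _))
    · exact (hmax hx).trans
        ((hsol.le_one_sub_beta_of_isMaxOn hL hε hρL.1 hmax).trans (le_max_right _ _))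

/-- For a monotone width function `k` (closing: `k' < 0`, resp. opening: `k' > 0`),
a `C²` classical solution with `0 < ρ < 1` has no interior local minimum (resp. maximum)
and satisfies `ρ ≥ min(α, 1−β)` (resp. `ρ ≤ max(α, 1−β)`). -/
theorem no_interior_extrema_monotone_width
    (L ε α β J : ℝ) (k k' ρ ρ' ρ'' : ℝ → ℝ)
    (hL : 0 < L) (hε : 0 < ε) (hα : α ∈ Ioo (0:ℝ) 1) (hβ : β ∈ Ioo (0:ℝ) 1)
    (hk : ∀ x ∈ Icc (0:ℝ) L, HasDerivWithinAt k (k' x) (Icc 0 L) x)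
    (hk'c : ContinuousOn k' (Icc 0 L))
    (hkpos : ∀ x ∈ Icc (0:ℝ) L, 0 < k x)
    (hsol : IsClassicalSolution L ε α β k ρ ρ' J)
    (hρ'' : ∀ x ∈ Icc (0:ℝ) L, HasDerivWithinAt ρ' (ρ'' x) (Icc 0 L) x)
    (hρ''c : ContinuousOn ρ'' (Icc 0 L))
    (hbound : ∀ x ∈ Icc (0:ℝ) L, 0 < ρ x ∧ ρ x < 1) :
    ((∀ x ∈ Icc (0:ℝ) L, k' x < 0) →
      (∀ x ∈ Ioo (0:ℝ) L, ¬ IsLocalMin ρ x) ∧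
      (∀ x ∈ Icc (0:ℝ) L, min α (1 - β) ≤ ρ x)) ∧
    ((∀ x ∈ Icc (0:ℝ) L, 0 < k' x) →
      (∀ x ∈ Ioo (0:ℝ) L, ¬ IsLocalMax ρ x) ∧
      (∀ x ∈ Icc (0:ℝ) L, ρ x ≤ max α (1 - β))) :=
  no_interior_extrema_monotone_width_general L ε α β J k k' ρ ρ' ρ'' hL hε hk hkpos hsol hρ'' hbound
end

section
/- Assume 0 < α < ρ_f, ρ*(α) < β < 1 and β ≠ 1 − ρ*(α). Suppose that for every ε > 0, (ρ_ε, J_ε) is a classical solution of the area-averaged pedestrian boundary value problem on [0,1] with diffusion ε. Then, as ε → 0⁺, J_ε → α·(1−α)·k(0), ρ_ε(0) → α, and ρ_ε(1) → α·(1−α)·k(0)/(β·k(1)). -/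
open Set Filter

/-- `ρ_f = (1/2)·(1 − √(1 − k(1)/k(0)))`. -/
noncomputable def rhoF (k : ℝ → ℝ) : ℝ := (1/2) * (1 - Real.sqrt (1 - k 1 / k 0))

/-- `ρ*(α) = (1/2)·(1 − √(1 − 4α(1−α)·k(0)/k(1)))`. -/
noncomputable def rhoStar (α : ℝ) (k : ℝ → ℝ) : ℝ :=
  (1/2) * (1 - Real.sqrt (1 - 4*α*(1-α) * k 0 / k 1))

/-- `ρ_*(β) = (1/2)·(1 + √(1 − 4β(1−β)·k(1)/k(0)))`. -/
noncomputable def rhoStarLow (β : ℝ) (k : ℝ → ℝ) : ℝ :=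
  (1/2) * (1 + Real.sqrt (1 - 4*β*(1-β) * k 1 / k 0))

open Topology

/-! The flux `J` is pinned from both sides by barrier (maximum-principle) arguments for
`ε ρ' = ρ (1 - ρ) - J / k`. If `J ≥ α (1 - α) k(0) + δ`, then `ρ(0) < α` and below the level `α`
the right-hand side is `≤ -δ / k(0)`, because `k` is decreasing; so `ρ` stays below `α` and falls
at rate `δ / (k(0) ε)`, becoming negative at `x = 1`, which contradicts `J = β k(1) ρ(1) > 0`.
If `J ≤ α (1 - α) k(0) - δ`, then `ρ(0) > α`; in a layer `[0, x₀]` on which `k` stays close to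
`k(0)`, `ρ` cannot drop below `α` and grows at rate `≳ δ / ε`, so it reaches `1 - α ≥ 1 - ρ*` when
`ε` is small. From there on the level `1 - ρ*` is a barrier from below, since
`ρ*(1 - ρ*) = α (1 - α) k(0) / k(1) > J / k(x)`; so `ρ(1) ≥ 1 - ρ*`, and
`J = β k(1) ρ(1) ≥ ρ* (1 - ρ*) k(1) = α (1 - α) k(0)` since `β > ρ*`, a contradiction.
The boundary values are then read off from `J = α k(0) (1 - ρ(0)) = β k(1) ρ(1)`. -/

-- `rhoF k = smallerRoot (k 1 / k 0)` and `rhoStar α k = smallerRoot (4 α (1 - α) k 0 / k 1)`.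
noncomputable def smallerRoot (q : ℝ) : ℝ := 1/2 * (1 - √(1 - q))

lemma smallerRoot_le_half (q : ℝ) : smallerRoot q ≤ 1/2 := by
  have := Real.sqrt_nonneg (1 - q)
  unfold smallerRoot
  linarith

lemma smallerRoot_mul_one_sub {q : ℝ} (hq : q ≤ 1) :
    smallerRoot q * (1 - smallerRoot q) = q / 4 := by
  have := Real.sq_sqrt (sub_nonneg.2 hq)
  unfold smallerRoot
  linear_combination (-1/4 : ℝ) * this

lemma four_mul_mul_one_sub_lt_of_lt_smallerRoot {a q : ℝ} (h : a < smallerRoot q) :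
    4 * a * (1 - a) < q := by
  have hs : √(1 - q) < 1 - 2 * a := by unfold smallerRoot at h; linarith
  have := (Real.sqrt_lt' ((Real.sqrt_nonneg _).trans_lt hs)).1 hs
  nlinarith

lemma le_smallerRoot {a q : ℝ} (ha : a ≤ 1/2) (h : 4 * a * (1 - a) ≤ q) : a ≤ smallerRoot q := by
  have hs : √(1 - q) ≤ 1 - 2 * a := (Real.sqrt_le_left (by linarith)).2 (by nlinarith)
  unfold smallerRoot
  linarith

lemma four_mul_lt_of_lt_rhoF {α : ℝ} {k : ℝ → ℝ} (hk0 : 0 < k 0) (h : α < rhoF k) :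
    4 * α * (1 - α) * k 0 < k 1 := by
  have := four_mul_mul_one_sub_lt_of_lt_smallerRoot (q := k 1 / k 0) h
  rwa [lt_div_iff₀ hk0] at this

lemma le_rhoStar {α : ℝ} {k : ℝ → ℝ} (hk1 : 0 < k 1) (hk10 : k 1 ≤ k 0) (hα0 : 0 ≤ α)
    (hα : α ≤ 1/2) : α ≤ rhoStar α k :=
  le_smallerRoot hα <| by
    rw [le_div_iff₀ hk1]
    nlinarith [mul_nonneg hα0 (by linarith : (0:ℝ) ≤ 1 - α)]

lemma rhoStar_mul_one_sub {α : ℝ} {k : ℝ → ℝ} (hk1 : 0 < k 1)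
    (hq : 4 * α * (1 - α) * k 0 ≤ k 1) :
    k 1 * (rhoStar α k * (1 - rhoStar α k)) = α * (1 - α) * k 0 := by
  rw [show rhoStar α k = smallerRoot (4 * α * (1 - α) * k 0 / k 1) from rfl,
    smallerRoot_mul_one_sub ((div_le_one hk1).2 hq)]
  field_simp

section Comparison

variable {f f' : ℝ → ℝ} {a b c K : ℝ}

lemma image_le_of_deriv_right_neg_of_eq (hf : ContinuousOn f (Icc a b))
    (hf' : ∀ x ∈ Ico a b, HasDerivWithinAt f (f' x) (Ici x) x) (ha : f a ≤ c)
    (hc : ∀ x ∈ Ico a b, f x = c → f' x < 0) : ∀ x ∈ Icc a b, f x ≤ c :=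
  fun _ hx => image_le_of_deriv_right_lt_deriv_boundary hf hf' ha (fun x => hasDerivAt_const x c)
    hc hx

lemma le_image_of_deriv_right_pos_of_eq (hf : ContinuousOn f (Icc a b))
    (hf' : ∀ x ∈ Ico a b, HasDerivWithinAt f (f' x) (Ici x) x) (ha : c ≤ f a)
    (hc : ∀ x ∈ Ico a b, f x = c → 0 < f' x) : ∀ x ∈ Icc a b, c ≤ f x :=
  fun _ hx => image_le_of_deriv_right_lt_deriv_boundary' continuousOn_const
    (fun x _ => hasDerivWithinAt_const x _ c) ha hf hf' (fun x hx hfx => hc x hx hfx.symm) hx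

lemma image_le_add_mul_of_deriv_right_le (hf : ContinuousOn f (Icc a b))
    (hf' : ∀ x ∈ Ico a b, HasDerivWithinAt f (f' x) (Ici x) x) (hK : ∀ x ∈ Ico a b, f' x ≤ K) :
    ∀ x ∈ Icc a b, f x ≤ f a + K * (x - a) := by
  have hB (x : ℝ) : HasDerivAt (fun x => f a + K * (x - a)) K x := by
    simpa using (((hasDerivAt_id x).sub_const a).const_mul K).const_add (f a)
  exact fun _ hx => image_le_of_deriv_right_le_deriv_boundary hf hf' (by simp)
    (fun x _ => (hB x).continuousAt.continuousWithinAt) (fun x _ => (hB x).hasDerivWithinAt) hK hx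

lemma add_mul_le_image_of_le_deriv_right (hf : ContinuousOn f (Icc a b))
    (hf' : ∀ x ∈ Ico a b, HasDerivWithinAt f (f' x) (Ici x) x) (hK : ∀ x ∈ Ico a b, K ≤ f' x) :
    ∀ x ∈ Icc a b, f a + K * (x - a) ≤ f x := by
  intro x hx
  have := image_le_add_mul_of_deriv_right_le hf.neg (fun x hx => (hf' x hx).neg)
    (fun x hx => neg_le_neg (hK x hx)) x hx
  simp only [Pi.neg_apply] at this
  linarith

lemma exists_forall_Icc_lt_of_continuousWithinAt {j : ℝ} (hab : a < b)
    (hf : ContinuousWithinAt f (Icc a b) a) (hj : j < f a) :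
    ∃ x₀ > a, x₀ ≤ b ∧ ∀ x ∈ Icc a x₀, j < f x := by
  have hev : ∀ᶠ x in 𝓝[≥] a, j < f x := by
    rw [← nhdsWithin_Icc_eq_nhdsGE hab]
    exact hf.eventually (lt_mem_nhds hj)
  obtain ⟨u, hau, hu⟩ := mem_nhdsGE_iff_exists_Icc_subset.1 hev
  exact ⟨min u b, lt_min hau hab, min_le_right _ _,
    fun x hx => hu ⟨hx.1, hx.2.trans (min_le_left _ _)⟩⟩

end Comparison

namespace IsClassicalSolution

variable {L ε α β J : ℝ} {k u u' : ℝ → ℝ}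

lemma flux_eq_left (hs : IsClassicalSolution L ε α β k u u' J) (hL : 0 ≤ L) :
    J = k 0 * (α * (1 - u 0)) := by
  rw [← hs.2.2.2.1]
  exact (hs.2.2.1 0 (left_mem_Icc.2 hL)).symm

lemma flux_eq_right (hs : IsClassicalSolution L ε α β k u u' J) (hL : 0 ≤ L) :
    J = k L * (β * u L) := by
  rw [← hs.2.2.2.2]
  exact (hs.2.2.1 L (right_mem_Icc.2 hL)).symm

lemma eps_mul_deriv_eq (hs : IsClassicalSolution L ε α β k u u' J) {x : ℝ} (hx : x ∈ Icc 0 L)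
    (hkx : k x ≠ 0) : ε * u' x = u x * (1 - u x) - J / k x := by
  rw [← hs.2.2.1 x hx, mul_div_cancel_left₀ _ hkx]
  ring

lemma continuousOn_Icc (hs : IsClassicalSolution L ε α β k u u' J) {a b : ℝ} (ha : 0 ≤ a)
    (hb : b ≤ L) : ContinuousOn u (Icc a b) :=
  fun x hx => ((hs.1 x (Icc_subset_Icc ha hb hx)).continuousWithinAt).mono (Icc_subset_Icc ha hb)

lemma hasDerivWithinAt_Ici (hs : IsClassicalSolution L ε α β k u u' J) {a b : ℝ} (ha : 0 ≤ a)
    (hb : b ≤ L) : ∀ x ∈ Ico a b, HasDerivWithinAt u (u' x) (Ici x) x := fun x hx =>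
  (hs.1 x ⟨ha.trans hx.1, hx.2.le.trans hb⟩).mono_of_mem_nhdsWithin <|
    mem_of_superset (Icc_mem_nhdsGE (hx.2.trans_le hb)) (Icc_subset_Icc_left (ha.trans hx.1))

lemma flux_lt (hs : IsClassicalSolution L ε α β k u u' J) (hL : 0 < L) (hε : 0 < ε)
    (hkpos : ∀ x ∈ Icc 0 L, 0 < k x) (hk : AntitoneOn k (Icc 0 L)) (hα0 : 0 < α)
    (hα : α ≤ 1/2) (hβ : 0 ≤ β) {j : ℝ} (hj : α * (1 - α) * k 0 < j)
    (hεj : ε < (j - α * (1 - α) * k 0) / k 0 * L) : J < j := by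
  by_contra! hJ
  have h0 : (0 : ℝ) ∈ Icc 0 L := left_mem_Icc.2 hL.le
  have hk0 := hkpos 0 h0
  set c := (j - α * (1 - α) * k 0) / k 0 with hc
  have hcpos : 0 < c := div_pos (by linarith) hk0
  have hJpos : 0 < J := by
    have : 0 < 1 - α := by linarith
    have : 0 < α * (1 - α) * k 0 := by positivity
    linarith
  have hu0 : u 0 ≤ α := by
    by_contra! h
    nlinarith [hs.flux_eq_left hL.le, mul_pos (mul_pos hk0 hα0) (sub_pos.2 h)]
  have hslope : ∀ x ∈ Icc 0 L, u x ≤ α → ε * u' x ≤ -c := by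
    intro x hx hux
    rw [hs.eps_mul_deriv_eq hx (hkpos x hx).ne']
    have hquad : u x * (1 - u x) ≤ α * (1 - α) := by
      nlinarith [mul_nonneg (sub_nonneg.2 hux) (by linarith : 0 ≤ 1 - α - u x)]
    have hdiv : j / k 0 ≤ J / k x :=
      div_le_div₀ hJpos.le hJ (hkpos x hx) (hk h0 hx hx.1)
    have : j / k 0 = α * (1 - α) + c := by rw [hc]; field_simp; ring
    linarith
  have hbelow : ∀ x ∈ Icc 0 L, u x ≤ α :=
    image_le_of_deriv_right_neg_of_eq (hs.continuousOn_Icc le_rfl le_rfl)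
      (hs.hasDerivWithinAt_Ici le_rfl le_rfl) hu0 fun x hx hux =>
        neg_of_mul_neg_right ((hslope x (Ico_subset_Icc_self hx) hux.le).trans_lt
          (neg_neg_of_pos hcpos)) hε.le
  have hdrop := image_le_add_mul_of_deriv_right_le (hs.continuousOn_Icc le_rfl le_rfl)
    (hs.hasDerivWithinAt_Ici le_rfl le_rfl) (K := -c / ε) (fun x hx => by
      rw [le_div_iff₀ hε, mul_comm]
      exact hslope x (Ico_subset_Icc_self hx) (hbelow x (Ico_subset_Icc_self hx)))
    L (right_mem_Icc.2 hL.le)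
  have hfast : 1 < c / ε * L := by rwa [div_mul_eq_mul_div, one_lt_div hε]
  have huL : u L < 0 := by
    rw [neg_div, sub_zero] at hdrop
    linarith
  have hJL : J ≤ 0 := hs.flux_eq_right hL.le ▸ mul_nonpos_of_nonneg_of_nonpos
    (hkpos L (right_mem_Icc.2 hL.le)).le (mul_nonpos_of_nonneg_of_nonpos hβ huL.le)
  linarith

lemma exists_one_sub_le (hs : IsClassicalSolution L ε α β k u u' J) (hε : 0 < ε)
    (hkpos : ∀ x ∈ Icc 0 L, 0 < k x) (hα0 : 0 < α) {e x₀ : ℝ} (hx₀ : 0 < x₀) (hx₀L : x₀ ≤ L)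
    (hlayer : ∀ x ∈ Icc 0 x₀, J < k x * (α * (1 - α) - e)) (hεe : ε < e * x₀) :
    ∃ x₁ ∈ Icc 0 x₀, 1 - α ≤ u x₁ := by
  have hsub : Icc 0 x₀ ⊆ Icc 0 L := Icc_subset_Icc_right hx₀L
  have hx₀mem : x₀ ∈ Icc 0 x₀ := right_mem_Icc.2 hx₀.le
  have he : 0 < e := pos_of_mul_pos_left (hε.trans hεe) hx₀.le
  have hgrowth : ∀ x ∈ Icc 0 x₀, u x * (1 - u x) - α * (1 - α) + e < ε * u' x := by
    intro x hx
    have hkx := hkpos x (hsub hx)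
    have := (div_lt_iff₀' hkx).2 (hlayer x hx)
    rw [hs.eps_mul_deriv_eq (hsub hx) hkx.ne']
    linarith
  have hu0 : α < u 0 := by
    have h := hlayer 0 (left_mem_Icc.2 hx₀.le)
    rw [hs.flux_eq_left (hx₀.le.trans hx₀L)] at h
    have hk0 := hkpos 0 (hsub (left_mem_Icc.2 hx₀.le))
    by_contra! hu0
    nlinarith [mul_nonneg (mul_pos hk0 hα0).le (sub_nonneg.2 hu0), mul_pos hk0 he]
  have habove : ∀ x ∈ Icc 0 x₀, α ≤ u x :=
    le_image_of_deriv_right_pos_of_eq (hs.continuousOn_Icc le_rfl hx₀L)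
      (hs.hasDerivWithinAt_Ici le_rfl hx₀L) hu0.le fun x hx hux => by
        have := hgrowth x (Ico_subset_Icc_self hx)
        rw [hux] at this
        exact pos_of_mul_pos_right (by linarith) hε.le
  by_contra! hlow
  have hgain := add_mul_le_image_of_le_deriv_right (hs.continuousOn_Icc le_rfl hx₀L)
    (hs.hasDerivWithinAt_Ici le_rfl hx₀L) (K := e / ε) (fun x hx => by
      have hx' := Ico_subset_Icc_self hx
      rw [div_le_iff₀ hε, mul_comm]
      nlinarith [hgrowth x hx',
        mul_nonneg (sub_nonneg.2 (habove x hx')) (sub_nonneg.2 (hlow x hx').le)])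
    x₀ hx₀mem
  have hfast : 1 < e / ε * x₀ := by rwa [div_mul_eq_mul_div, one_lt_div hε]
  rw [sub_zero] at hgain
  linarith [hlow x₀ hx₀mem]

lemma lt_flux (hs : IsClassicalSolution L ε α β k u u' J) (hL : 0 < L) (hε : 0 < ε)
    (hkpos : ∀ x ∈ Icc 0 L, 0 < k x) (hk : AntitoneOn k (Icc 0 L)) (hα0 : 0 < α) {P : ℝ}
    (hαP : α ≤ P) (hPβ : P ≤ β) (hP1 : P ≤ 1) (hPk : α * (1 - α) * k 0 ≤ k L * (P * (1 - P)))
    {j e x₀ : ℝ} (hx₀ : 0 < x₀) (hx₀L : x₀ ≤ L)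
    (hlayer : ∀ x ∈ Icc 0 x₀, j < k x * (α * (1 - α) - e)) (hεe : ε < e * x₀)
    (hj : j < α * (1 - α) * k 0) : j < J := by
  by_contra! hJ
  obtain ⟨x₁, hx₁, hux₁⟩ := hs.exists_one_sub_le hε hkpos hα0 hx₀ hx₀L
    (fun x hx => hJ.trans_lt (hlayer x hx)) hεe
  have hLmem : L ∈ Icc 0 L := right_mem_Icc.2 hL.le
  have hkL := hkpos L hLmem
  have hP0 : 0 ≤ P := hα0.le.trans hαP
  have hPP : 0 ≤ P * (1 - P) := mul_nonneg hP0 (by linarith)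
  have hright : 1 - P ≤ u L :=
    le_image_of_deriv_right_pos_of_eq (hs.continuousOn_Icc hx₁.1 le_rfl)
      (hs.hasDerivWithinAt_Ici hx₁.1 le_rfl) (by linarith) (fun x hx hux => by
        have hx' : x ∈ Icc 0 L := ⟨hx₁.1.trans hx.1, hx.2.le⟩
        have hkx := hkpos x hx'
        have hdiv : J / k x < P * (1 - P) := (div_lt_iff₀ hkx).2 (by
          nlinarith [mul_le_mul_of_nonneg_left (hk hx' hLmem hx.2.le) hPP])
        have := hs.eps_mul_deriv_eq hx' hkx.ne'
        rw [hux] at this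
        exact pos_of_mul_pos_right (by linarith) hε.le) L (right_mem_Icc.2 (hx₁.2.trans hx₀L))
  have hPu : P * (1 - P) ≤ β * u L :=
    calc P * (1 - P) ≤ P * u L := mul_le_mul_of_nonneg_left hright hP0
      _ ≤ β * u L := mul_le_mul_of_nonneg_right hPβ (by linarith)
  have := mul_le_mul_of_nonneg_left hPu hkL.le
  rw [← hs.flux_eq_right hL.le] at this
  linarith

end IsClassicalSolution

section VanishingViscosity

variable {L α β : ℝ} {k : ℝ → ℝ} {ρ ρ' : ℝ → ℝ → ℝ} {J : ℝ → ℝ}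

lemma eventually_flux_lt (hL : 0 < L) (hkpos : ∀ x ∈ Icc 0 L, 0 < k x)
    (hk : AntitoneOn k (Icc 0 L)) (hα0 : 0 < α) (hα : α ≤ 1/2) (hβ : 0 ≤ β)
    (hsol : ∀ ε > 0, IsClassicalSolution L ε α β k (ρ ε) (ρ' ε) (J ε)) {j : ℝ}
    (hj : α * (1 - α) * k 0 < j) : ∀ᶠ ε in 𝓝[>] 0, J ε < j := by
  have hk0 := hkpos 0 (left_mem_Icc.2 hL.le)
  filter_upwards [Ioo_mem_nhdsGT (mul_pos (div_pos (sub_pos.2 hj) hk0) hL)] with ε hε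
  exact (hsol ε hε.1).flux_lt hL hε.1 hkpos hk hα0 hα hβ hj hε.2

lemma eventually_lt_flux (hL : 0 < L) (hkpos : ∀ x ∈ Icc 0 L, 0 < k x)
    (hk : AntitoneOn k (Icc 0 L)) (hkc : ContinuousWithinAt k (Icc 0 L) 0) (hα0 : 0 < α)
    {P : ℝ} (hαP : α ≤ P) (hPβ : P ≤ β) (hP1 : P ≤ 1)
    (hPk : α * (1 - α) * k 0 ≤ k L * (P * (1 - P)))
    (hsol : ∀ ε > 0, IsClassicalSolution L ε α β k (ρ ε) (ρ' ε) (J ε)) {j : ℝ}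
    (hj : j < α * (1 - α) * k 0) : ∀ᶠ ε in 𝓝[>] 0, j < J ε := by
  have hk0 := hkpos 0 (left_mem_Icc.2 hL.le)
  set e := (α * (1 - α) * k 0 - j) / (2 * k 0) with he
  have hje : j < k 0 * (α * (1 - α) - e) := by
    rw [he]
    field_simp
    linarith
  obtain ⟨x₀, hx₀, hx₀L, hlayer⟩ :=
    exists_forall_Icc_lt_of_continuousWithinAt hL (hkc.mul continuousWithinAt_const) hje
  have he0 : 0 < e := div_pos (sub_pos.2 hj) (by positivity)
  filter_upwards [Ioo_mem_nhdsGT (mul_pos he0 hx₀)] with ε hε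
  exact (hsol ε hε.1).lt_flux hL hε.1 hkpos hk hα0 hαP hPβ hP1 hPk hx₀ hx₀L hlayer hε.2 hj

lemma tendsto_flux (hL : 0 < L) (hkpos : ∀ x ∈ Icc 0 L, 0 < k x)
    (hk : AntitoneOn k (Icc 0 L)) (hkc : ContinuousWithinAt k (Icc 0 L) 0) (hα0 : 0 < α)
    (hα : α ≤ 1/2) {P : ℝ} (hαP : α ≤ P) (hPβ : P ≤ β) (hP1 : P ≤ 1)
    (hPk : α * (1 - α) * k 0 ≤ k L * (P * (1 - P)))
    (hsol : ∀ ε > 0, IsClassicalSolution L ε α β k (ρ ε) (ρ' ε) (J ε)) :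
    Tendsto J (𝓝[>] 0) (𝓝 (α * (1 - α) * k 0)) :=
  tendsto_order.2 ⟨fun _ hj => eventually_lt_flux hL hkpos hk hkc hα0 hαP hPβ hP1 hPk hsol hj,
    fun _ hj => eventually_flux_lt hL hkpos hk hα0 hα (hα0.le.trans (hαP.trans hPβ)) hsol hj⟩

lemma tendsto_left_value (hL : 0 ≤ L) (hα : α ≠ 0) (hk0 : k 0 ≠ 0)
    (hsol : ∀ ε > 0, IsClassicalSolution L ε α β k (ρ ε) (ρ' ε) (J ε)) {j : ℝ}
    (hJ : Tendsto J (𝓝[>] 0) (𝓝 j)) :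
    Tendsto (fun ε => ρ ε 0) (𝓝[>] 0) (𝓝 (1 - j / (k 0 * α))) := by
  refine ((hJ.div_const _).const_sub 1).congr' ?_
  filter_upwards [self_mem_nhdsWithin] with ε hε
  rw [(hsol ε hε).flux_eq_left hL]
  field_simp
  ring

lemma tendsto_right_value (hL : 0 ≤ L) (hβ : β ≠ 0) (hkL : k L ≠ 0)
    (hsol : ∀ ε > 0, IsClassicalSolution L ε α β k (ρ ε) (ρ' ε) (J ε)) {j : ℝ}
    (hJ : Tendsto J (𝓝[>] 0) (𝓝 j)) :
    Tendsto (fun ε => ρ ε L) (𝓝[>] 0) (𝓝 (j / (β * k L))) := by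
  refine (hJ.div_const _).congr' ?_
  filter_upwards [self_mem_nhdsWithin] with ε hε
  rw [(hsol ε hε).flux_eq_right hL]
  field_simp

end VanishingViscosity

theorem vanishing_viscosity_region12_boundary_general
    (α β : ℝ) (k k' : ℝ → ℝ) (ρ ρ' : ℝ → ℝ → ℝ) (J : ℝ → ℝ)
    (hk : ∀ x ∈ Icc (0:ℝ) 1, HasDerivWithinAt k (k' x) (Icc 0 1) x)
    (hkpos : ∀ x ∈ Icc (0:ℝ) 1, 0 < k x)
    (hk'neg : ∀ x ∈ Icc (0:ℝ) 1, k' x < 0)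
    (hα0 : 0 < α) (hαf : α < rhoF k)
    (hβ1 : rhoStar α k < β)
    (hsol : ∀ ε > 0, IsClassicalSolution 1 ε α β k (ρ ε) (ρ' ε) (J ε)) :
    Tendsto J (nhdsWithin 0 (Ioi 0)) (nhds (α * (1 - α) * k 0)) ∧
    Tendsto (fun ε => ρ ε 0) (nhdsWithin 0 (Ioi 0)) (nhds α) ∧
    Tendsto (fun ε => ρ ε 1) (nhdsWithin 0 (Ioi 0))
      (nhds (α * (1 - α) * k 0 / (β * k 1))) := by
  have h0 : (0 : ℝ) ∈ Icc 0 1 := left_mem_Icc.2 zero_le_one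
  have h1 : (1 : ℝ) ∈ Icc 0 1 := right_mem_Icc.2 zero_le_one
  have hk0 := hkpos 0 h0
  have hk1 := hkpos 1 h1
  have hkanti : AntitoneOn k (Icc 0 1) :=
    antitoneOn_of_hasDerivWithinAt_nonpos (convex_Icc 0 1)
      (fun x hx => (hk x hx).continuousWithinAt)
      (fun x hx => (hk x (interior_subset hx)).mono interior_subset)
      (fun x hx => (hk'neg x (interior_subset hx)).le)
  have hα : α ≤ 1/2 := hαf.le.trans (smallerRoot_le_half _)
  have hq := four_mul_lt_of_lt_rhoF hk0 hαf
  have hαP := le_rhoStar hk1 (hkanti h0 h1 zero_le_one) hα0.le hα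
  have hJ := tendsto_flux one_pos hkpos hkanti (hk 0 h0).continuousWithinAt hα0 hα hαP hβ1.le
    ((smallerRoot_le_half _).trans (by norm_num)) (rhoStar_mul_one_sub hk1 hq.le).ge hsol
  have hβ : 0 < β := hα0.trans_le (hαP.trans hβ1.le)
  refine ⟨hJ, ?_, tendsto_right_value zero_le_one hβ.ne' hk1.ne' hsol hJ⟩
  convert tendsto_left_value zero_le_one hα0.ne' hk0.ne' hsol hJ using 2
  field_simp
  ring

/-- Vanishing-viscosity limits of the flux and the boundary values in region G₁ ∪ G₂. -/
theorem vanishing_viscosity_region12_boundary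
    (α β : ℝ) (k k' : ℝ → ℝ) (ρ ρ' : ℝ → ℝ → ℝ) (J : ℝ → ℝ)
    (hk : ∀ x ∈ Icc (0:ℝ) 1, HasDerivWithinAt k (k' x) (Icc 0 1) x)
    (hk'c : ContinuousOn k' (Icc 0 1))
    (hkpos : ∀ x ∈ Icc (0:ℝ) 1, 0 < k x)
    (hk'neg : ∀ x ∈ Icc (0:ℝ) 1, k' x < 0)
    (hα0 : 0 < α) (hαf : α < rhoF k)
    (hβ1 : rhoStar α k < β) (hβ2 : β < 1) (hβne : β ≠ 1 - rhoStar α k)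
    (hsol : ∀ ε > 0, IsClassicalSolution 1 ε α β k (ρ ε) (ρ' ε) (J ε)) :
    Tendsto J (nhdsWithin 0 (Ioi 0)) (nhds (α * (1 - α) * k 0)) ∧
    Tendsto (fun ε => ρ ε 0) (nhdsWithin 0 (Ioi 0)) (nhds α) ∧
    Tendsto (fun ε => ρ ε 1) (nhdsWithin 0 (Ioi 0))
      (nhds (α * (1 - α) * k 0 / (β * k 1))) :=
  vanishing_viscosity_region12_boundary_general α β k k' ρ ρ' J hk hkpos hk'neg hα0 hαf hβ1 hsol
end
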